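/- arXiv:1604.02842 — 6 statements merged into one kernel-verified Lean document; each statement's English description precedes it below -/
import Mathlib

section
/- Let a, b ∈ ℝ and define w(t,x) := a (6bt + 1)^{−1/3} − b x² / (6bt + 1) for x ∈ ℝ and for all t with 6bt + 1 > 0. Then w satisfies the Boussinesq equation ∂_t w = (∂_x w)² + w ∂_xx w, equivalently ∂_t w = (1/2) ∂_xx(w²), on this time domain. -/
open Real Set

/-- Partial derivative in the first (time) variable. -/
noncomputable def pt (f : ℝ → ℝ → ℝ) (t x : ℝ) : ℝ := deriv (fun s => f s x) t

/-- Partial derivative in the second (space) variable. -/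
noncomputable def px (f : ℝ → ℝ → ℝ) (t x : ℝ) : ℝ := deriv (fun y => f t y) x

/-!
At each time the profile is the parabola `c - k y²` with `c = a u^{-1/3}`, `k = b / u`,
`u = 6bt + 1`. For such a parabola both `(∂ₓw)² + w ∂ₓₓw` and `(1/2) ∂ₓₓ(w²)` equal
`6k²y² - 2ck`. Since `u' = 6b`, the coefficients evolve by `c' = -2ck` and `k' = -6k²`,
so `∂ₜw = c' - k'y²` is the same expression.
-/

section QuadraticProfile

variable (c k : ℝ)

theorem hasDerivAt_const_sub_mul_sq (y : ℝ) :
    HasDerivAt (fun y => c - k * y ^ 2) (-(2 * k * y)) y :=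
  (((hasDerivAt_pow 2 y).const_mul k).const_sub c).congr_deriv (by ring)

theorem deriv_const_sub_mul_sq :
    deriv (fun y => c - k * y ^ 2) = fun y => -(2 * k * y) :=
  funext fun y => (hasDerivAt_const_sub_mul_sq c k y).deriv

theorem deriv_deriv_const_sub_mul_sq (y : ℝ) :
    deriv (deriv fun y => c - k * y ^ 2) y = -(2 * k) := by
  rw [deriv_const_sub_mul_sq]
  simp

theorem deriv_sq_const_sub_mul_sq :
    deriv (fun y => (c - k * y ^ 2) ^ 2) = fun y => 4 * k ^ 2 * y ^ 3 - 4 * c * k * y :=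
  funext fun y => ((hasDerivAt_const_sub_mul_sq c k y).pow 2).deriv.trans (by ring)

theorem deriv_deriv_sq_const_sub_mul_sq (y : ℝ) :
    deriv (deriv fun y => (c - k * y ^ 2) ^ 2) y = 12 * k ^ 2 * y ^ 2 - 4 * c * k := by
  rw [deriv_sq_const_sub_mul_sq]
  have hcubic := (((hasDerivAt_pow 3 y).const_mul (4 * k ^ 2)).sub
    ((hasDerivAt_id y).const_mul (4 * c * k)))
  exact hcubic.deriv.trans (by push_cast; ring)

end QuadraticProfile

theorem deriv_selfSimilarProfile_time (a b x t : ℝ) (ht : 0 < 6 * b * t + 1) :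
    deriv (fun s => a * (6 * b * s + 1) ^ (-(1/3) : ℝ) - b * x ^ 2 / (6 * b * s + 1)) t
      = 6 * (b / (6 * b * t + 1)) ^ 2 * x ^ 2
        - 2 * (a * (6 * b * t + 1) ^ (-(1/3) : ℝ)) * (b / (6 * b * t + 1)) := by
  set u := 6 * b * t + 1
  have hu : HasDerivAt (fun s => 6 * b * s + 1) (6 * b) t := by
    simpa using ((hasDerivAt_id t).const_mul (6 * b)).add_const 1
  have hpow := (Real.hasDerivAt_rpow_const (p := (-(1/3) : ℝ)) (Or.inl ht.ne')).comp t hu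
  have hquot := (hasDerivAt_const t (b * x ^ 2)).div hu ht.ne'
  have hprofile : HasDerivAt
      (fun s => a * (6 * b * s + 1) ^ (-(1/3) : ℝ) - b * x ^ 2 / (6 * b * s + 1))
      (a * (-(1/3) * u ^ (-(1/3) - 1 : ℝ) * (6 * b)) - (0 * u - b * x ^ 2 * (6 * b)) / u ^ 2) t :=
    (hpow.const_mul a).sub hquot
  rw [hprofile.deriv, Real.rpow_sub ht, Real.rpow_one]
  field_simp
  ring

/-- The quadratic profile `w(t,x) = a(6bt+1)^{-1/3} − bx²/(6bt+1)` satisfies the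
Boussinesq equation `∂ₜw = (∂ₓw)² + w ∂ₓₓw`, equivalently `∂ₜw = (1/2)∂ₓₓ(w²)`,
wherever `6bt + 1 > 0`. -/
theorem stmt_7 (a b : ℝ) (w : ℝ → ℝ → ℝ)
    (hw : w = fun t x => a * (6 * b * t + 1) ^ (-(1/3) : ℝ) - b * x ^ 2 / (6 * b * t + 1)) :
    ∀ t : ℝ, 0 < 6 * b * t + 1 → ∀ x : ℝ,
      pt w t x = (px w t x) ^ 2 + w t x * px (px w) t x ∧
      pt w t x = (1/2) * px (px (fun s y => (w s y) ^ 2)) t x := by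
  intro t ht x
  set c := a * (6 * b * t + 1) ^ (-(1/3) : ℝ)
  set k := b / (6 * b * t + 1)
  have hslice : (fun y => w t y) = fun y => c - k * y ^ 2 := by
    funext y; rw [hw]; ring
  have htime : pt w t x = 6 * k ^ 2 * x ^ 2 - 2 * c * k := by
    rw [pt, hw]; exact deriv_selfSimilarProfile_time a b x t ht
  constructor
  · simp only [px, hslice, htime]
    rw [deriv_deriv_const_sub_mul_sq, deriv_const_sub_mul_sq]
    ring
  · simp only [px, hslice, htime, deriv_deriv_sq_const_sub_mul_sq]
    ring
end

section
/- Let b ∈ ℝ, let u₀ : ℝ → ℝ be continuously differentiable, and define u(x,t) := u₀( x (6bt + 1)^{−1/3} ) · (6bt + 1)^{−1/3} for x ∈ ℝ and for all t with 6bt + 1 > 0. Then u satisfies the continuity equation ∂_t u + ∂_x( (2bx / (6bt + 1)) · u ) = 0 on this domain, with u(x,0) = u₀(x). -/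
/-!
The profile is a self-similar rescaling `u(x,t) = u₀(x c(t)) c(t)` with `c(t) = (6bt+1)^{-1/3}`.
For any such rescaling, a linear drift `V(x,t) = k x` transports it whenever `c' = -k c`:
the two terms `u₀(xc) c'` and `x u₀'(xc) c c'` of `∂ₜu` cancel against `∂ₓ(k x u)`.
Here `c' = -(2b/(6bt+1)) c`, which is the drift of the continuity equation.
-/

section ScaledProfile

variable {u₀ : ℝ → ℝ}

theorem hasDerivAt_scaledProfile_time (hu₀ : Differentiable ℝ u₀) {c : ℝ → ℝ} {c' t : ℝ}
    (hc : HasDerivAt c c' t) (x : ℝ) :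
    HasDerivAt (fun s => u₀ (x * c s) * c s)
      (deriv u₀ (x * c t) * (x * c') * c t + u₀ (x * c t) * c') t :=
  ((hu₀ _).hasDerivAt.comp t (hc.const_mul x)).mul hc

theorem hasDerivAt_linearDrift_mul_scaledProfile (hu₀ : Differentiable ℝ u₀) (k γ x : ℝ) :
    HasDerivAt (fun y => k * y * (u₀ (y * γ) * γ))
      (k * (u₀ (x * γ) * γ) + k * x * (deriv u₀ (x * γ) * γ * γ)) x := by
  have hscale : HasDerivAt (fun y : ℝ => y * γ) γ x := by
    simpa using (hasDerivAt_id x).mul_const γ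
  have hprofile := ((hu₀ _).hasDerivAt.comp x hscale).mul_const γ
  simpa using ((hasDerivAt_id x).const_mul k).fun_mul hprofile

theorem scaledProfile_continuity_eq (hu₀ : Differentiable ℝ u₀) {c : ℝ → ℝ} {k t : ℝ}
    (hc : HasDerivAt c (-k * c t) t) (x : ℝ) :
    deriv (fun s => u₀ (x * c s) * c s) t
      + deriv (fun y => k * y * (u₀ (y * c t) * c t)) x = 0 := by
  rw [(hasDerivAt_scaledProfile_time hu₀ hc x).deriv,
    (hasDerivAt_linearDrift_mul_scaledProfile hu₀ k (c t) x).deriv]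
  ring

end ScaledProfile

theorem hasDerivAt_affine_rpow {a β p t : ℝ} (ht : a * t + β ≠ 0) :
    HasDerivAt (fun s => (a * s + β) ^ p) (p * a / (a * t + β) * (a * t + β) ^ p) t := by
  have haffine : HasDerivAt (fun s => a * s + β) a t := by
    simpa using ((hasDerivAt_id t).const_mul a).add_const β
  refine ((Real.hasDerivAt_rpow_const (Or.inl ht)).comp t haffine).congr_deriv ?_
  rw [Real.rpow_sub_one ht]
  ring

/-- `u(x,t) = u₀(x(6bt+1)^{-1/3})(6bt+1)^{-1/3}` satisfies the continuity equation
`∂ₜu + ∂ₓ((2bx/(6bt+1))u) = 0` wherever `6bt + 1 > 0`, with `u(x,0) = u₀(x)`. -/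
theorem stmt_8 (b : ℝ) (u₀ : ℝ → ℝ) (hu₀ : ContDiff ℝ 1 u₀)
    (u : ℝ → ℝ → ℝ)
    (hu : u = fun x t =>
      u₀ (x * (6 * b * t + 1) ^ (-(1/3) : ℝ)) * (6 * b * t + 1) ^ (-(1/3) : ℝ)) :
    (∀ x t : ℝ, 0 < 6 * b * t + 1 →
      deriv (fun s => u x s) t
        + deriv (fun y => (2 * b * y / (6 * b * t + 1)) * u y t) x = 0) ∧
    (∀ x : ℝ, u x 0 = u₀ x) := by
  subst hu
  refine ⟨fun x t ht => ?_, fun x => by norm_num⟩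
  have hc : HasDerivAt (fun s => (6 * b * s + 1) ^ (-(1/3) : ℝ))
      (-(2 * b / (6 * b * t + 1)) * (6 * b * t + 1) ^ (-(1/3) : ℝ)) t := by
    convert hasDerivAt_affine_rpow (p := -(1/3)) ht.ne' using 2
    ring
  simp_rw [mul_div_right_comm (2 * b)]
  exact scaledProfile_continuity_eq (hu₀.differentiable one_ne_zero) hc x
end

section
/- Let a, b ∈ ℝ and let u₀ : ℝ → ℝ be continuously differentiable. Define, for x ∈ ℝ and all t with 6bt + 1 > 0, w(t,x) := a (6bt + 1)^{−1/3} − b x² / (6bt + 1) and u(t,x) := u₀( x (6bt + 1)^{−1/3} ) · (6bt + 1)^{−1/3}. Then the pair (w, u) satisfies the transformed system ∂_t w = (1/2) ∂_xx(w²) and ∂_t u = ∂_x(u ∂_x w) on this domain, with w(0,x) = a − b x² and u(0,x) = u₀(x). -/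
open Real Set

/-!
Both equations are checked by differentiating the explicit formulas. With `c = 6bt + 1` one has
`∂ₓw = -2bx/c` and `∂ₓₓw = -2b/c`, so `(1/2)∂ₓₓ(w²) = (∂ₓw)² + w ∂ₓₓw = 6b²x²/c² - 2ab c^{-4/3} = ∂ₜw`;
and since `∂ₜ c^{-1/3} = -2b c^{-4/3}`, both sides of the `u`-equation equal
`-2b c^{-4/3} (x c^{-1/3} u₀'(x c^{-1/3}) + u₀(x c^{-1/3}))`.
-/

theorem hasDerivAt_mul_add_one (k t : ℝ) : HasDerivAt (fun s => k * s + 1) k t := by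
  simpa using ((hasDerivAt_id t).const_mul k).add_const 1

theorem hasDerivAt_mul_add_one_rpow {k t : ℝ} (p : ℝ) (ht : 0 < k * t + 1) :
    HasDerivAt (fun s => (k * s + 1) ^ p) (p * k * (k * t + 1) ^ p / (k * t + 1)) t := by
  convert (hasDerivAt_mul_add_one k t).rpow_const (p := p) (Or.inl ht.ne') using 1
  rw [rpow_sub_one ht.ne']
  ring

theorem hasDerivAt_sub_mul_sq_div (A b c y : ℝ) :
    HasDerivAt (fun y => A - b * y ^ 2 / c) (-(2 * b * y / c)) y :=
  ((hasDerivAt_const y A).sub (((hasDerivAt_pow 2 y).const_mul b).div_const c)).congr_deriv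
    (by simp; ring)

theorem hasDerivAt_neg_mul_div_const (k c x : ℝ) :
    HasDerivAt (fun y => -(k * y / c)) (-(k / c)) x :=
  (((hasDerivAt_id' x).const_mul k).div_const c).neg.congr_deriv (by ring)

theorem deriv_deriv_sq {f f' : ℝ → ℝ} {f'' x : ℝ} (hf : ∀ y, HasDerivAt f (f' y) y)
    (hf' : HasDerivAt f' f'' x) :
    deriv (fun y => deriv (fun z => f z ^ 2) y) x = 2 * (f' x ^ 2 + f x * f'') := by
  have hsq : deriv (fun z => f z ^ 2) = fun y => 2 * f y * f' y :=
    funext fun y => ((hf y).pow 2).deriv.trans (by ring)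
  rw [hsq]
  exact (((hf x).const_mul 2).mul hf').deriv.trans (by ring)

theorem hasDerivAt_comp_mul_const_mul_const {g : ℝ → ℝ} (e : ℝ) {y : ℝ}
    (hg : DifferentiableAt ℝ g (y * e)) :
    HasDerivAt (fun y => g (y * e) * e) (deriv g (y * e) * e * e) y := by
  simpa using (hg.hasDerivAt.comp y ((hasDerivAt_id y).mul_const e)).mul_const e

section SelfSimilar

variable (a b : ℝ) (u₀ : ℝ → ℝ)

noncomputable def selfSimilarW : ℝ → ℝ → ℝ := fun t x =>
  a * (6 * b * t + 1) ^ (-(1/3) : ℝ) - b * x ^ 2 / (6 * b * t + 1)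

noncomputable def selfSimilarU : ℝ → ℝ → ℝ := fun t x =>
  u₀ (x * (6 * b * t + 1) ^ (-(1/3) : ℝ)) * (6 * b * t + 1) ^ (-(1/3) : ℝ)

variable {a b u₀}

theorem hasDerivAt_selfSimilarW_space (t y : ℝ) :
    HasDerivAt (fun y => selfSimilarW a b t y) (-(2 * b * y / (6 * b * t + 1))) y :=
  hasDerivAt_sub_mul_sq_div _ _ _ y

theorem px_selfSimilarW (t y : ℝ) :
    px (selfSimilarW a b) t y = -(2 * b * y / (6 * b * t + 1)) :=
  (hasDerivAt_selfSimilarW_space t y).deriv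

theorem selfSimilarW_boussinesq {t : ℝ} (ht : 0 < 6 * b * t + 1) (x : ℝ) :
    pt (selfSimilarW a b) t x = 1/2 * px (px fun s y => selfSimilarW a b s y ^ 2) t x := by
  have hwt : HasDerivAt (fun s => selfSimilarW a b s x)
      (a * (-(1/3) * (6 * b) * (6 * b * t + 1) ^ (-(1/3) : ℝ) / (6 * b * t + 1))
        - (0 * (6 * b * t + 1) - b * x ^ 2 * (6 * b)) / (6 * b * t + 1) ^ 2) t :=
    ((hasDerivAt_mul_add_one_rpow _ ht).const_mul a).sub
      ((hasDerivAt_const t (b * x ^ 2)).div (hasDerivAt_mul_add_one _ t) ht.ne')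
  simp only [pt, px]
  rw [hwt.deriv, deriv_deriv_sq (hasDerivAt_selfSimilarW_space t)
    (hasDerivAt_neg_mul_div_const _ _ x)]
  simp only [selfSimilarW]
  have := ht.ne'
  field_simp
  ring

theorem selfSimilarU_continuity (hu₀ : Differentiable ℝ u₀) {t : ℝ} (ht : 0 < 6 * b * t + 1)
    (x : ℝ) :
    pt (selfSimilarU b u₀) t x
      = px (fun s y => selfSimilarU b u₀ s y * px (selfSimilarW a b) s y) t x := by
  have he := hasDerivAt_mul_add_one_rpow (-(1/3)) ht
  have hut := ((hu₀ _).hasDerivAt.comp t (he.const_mul x)).mul he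
  have hflux := (hasDerivAt_comp_mul_const_mul_const
    ((6 * b * t + 1) ^ (-(1/3) : ℝ)) (hu₀ _)).mul
    (hasDerivAt_neg_mul_div_const (2 * b) (6 * b * t + 1) x)
  simp only [px_selfSimilarW]
  refine hut.deriv.trans (.trans ?_ hflux.deriv.symm)
  simp only [Function.comp_apply]
  have := ht.ne'
  field_simp
  ring

end SelfSimilar

/-- The pair `w(t,x) = a(6bt+1)^{-1/3} − bx²/(6bt+1)`,
`u(t,x) = u₀(x(6bt+1)^{-1/3})(6bt+1)^{-1/3}` satisfies the transformed system
`∂ₜw = (1/2)∂ₓₓ(w²)`, `∂ₜu = ∂ₓ(u ∂ₓw)` wherever `6bt + 1 > 0`,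
with `w(0,x) = a − bx²` and `u(0,x) = u₀(x)`. -/
theorem stmt_9 (a b : ℝ) (u₀ : ℝ → ℝ) (hu₀ : ContDiff ℝ 1 u₀)
    (w u : ℝ → ℝ → ℝ)
    (hw : w = fun t x => a * (6 * b * t + 1) ^ (-(1/3) : ℝ) - b * x ^ 2 / (6 * b * t + 1))
    (hu : u = fun t x =>
      u₀ (x * (6 * b * t + 1) ^ (-(1/3) : ℝ)) * (6 * b * t + 1) ^ (-(1/3) : ℝ)) :
    (∀ t : ℝ, 0 < 6 * b * t + 1 → ∀ x : ℝ,
      pt w t x = (1/2) * px (px (fun s y => (w s y) ^ 2)) t x ∧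
      pt u t x = px (fun s y => u s y * px w s y) t x) ∧
    (∀ x : ℝ, w 0 x = a - b * x ^ 2) ∧
    (∀ x : ℝ, u 0 x = u₀ x) := by
  subst hw hu
  have hdiff : Differentiable ℝ u₀ := hu₀.differentiable one_ne_zero
  refine ⟨fun t ht x => ⟨selfSimilarW_boussinesq ht x, selfSimilarU_continuity hdiff ht x⟩,
    fun x => ?_, fun x => ?_⟩ <;> norm_num
end

section
/- Let u, v : ℝ × ℝ → ℝ be twice continuously differentiable with u(t,x) > 0 and v(t,x) > 0 everywhere, and suppose they satisfy ∂_t u = ∂_x(u ∂_x(u+v)) and ∂_t v = ∂_x(v ∂_x(u+v)). Then the relative entropy density satisfies the local conservation law ∂_t ( u log(u/v) ) = ∂_x ( u log(u/v) · ∂_x(u+v) ) at every point (t,x). -/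
open Real Set

/-- For positive solutions of `∂ₜu = ∂ₓ(u ∂ₓ(u+v))`, `∂ₜv = ∂ₓ(v ∂ₓ(u+v))`,
the relative entropy density satisfies the local conservation law
`∂ₜ(u log(u/v)) = ∂ₓ(u log(u/v) ∂ₓ(u+v))`. -/
theorem stmt_10 (u v : ℝ → ℝ → ℝ)
    (husmooth : ContDiff ℝ 2 (Function.uncurry u))
    (hvsmooth : ContDiff ℝ 2 (Function.uncurry v))
    (hupos : ∀ t x : ℝ, 0 < u t x) (hvpos : ∀ t x : ℝ, 0 < v t x)
    (hu : ∀ t x : ℝ,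
      pt u t x = px (fun s y => u s y * px (fun a b => u a b + v a b) s y) t x)
    (hv : ∀ t x : ℝ,
      pt v t x = px (fun s y => v s y * px (fun a b => u a b + v a b) s y) t x) :
    ∀ t x : ℝ,
      pt (fun s y => u s y * Real.log (u s y / v s y)) t x
        = px (fun s y =>
            u s y * Real.log (u s y / v s y) * px (fun a b => u a b + v a b) s y) t x := by
  intro t x
  -- slices are C²
  have hUt : ContDiff ℝ 2 (fun s => u s x) :=
    husmooth.comp (contDiff_id.prodMk contDiff_const)
  have hVt : ContDiff ℝ 2 (fun s => v s x) :=
    hvsmooth.comp (contDiff_id.prodMk contDiff_const)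
  have hUx : ContDiff ℝ 2 (fun y => u t y) :=
    husmooth.comp (contDiff_const.prodMk contDiff_id)
  have hVx : ContDiff ℝ 2 (fun y => v t y) :=
    hvsmooth.comp (contDiff_const.prodMk contDiff_id)
  have hWx : ContDiff ℝ 2 (fun y => u t y + v t y) := hUx.add hVx
  -- the spatial derivative of u+v is C¹
  have hW2' := (contDiff_succ_iff_deriv (n := 1)).mp (by exact_mod_cast hWx)
  have hW2 : Differentiable ℝ (fun y => u t y + v t y) ∧
      ContDiff ℝ 1 (deriv (fun y => u t y + v t y)) := ⟨hW2'.1, hW2'.2.2⟩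
  -- HasDerivAt facts in the time direction
  have hu_t : HasDerivAt (fun s => u s x) (pt u t x) t :=
    ((hUt.differentiable (by norm_num)) t).hasDerivAt
  have hv_t : HasDerivAt (fun s => v s x) (pt v t x) t :=
    ((hVt.differentiable (by norm_num)) t).hasDerivAt
  -- HasDerivAt facts in the space direction
  have hu_x : HasDerivAt (fun y => u t y) (px u t x) x :=
    ((hUx.differentiable (by norm_num)) x).hasDerivAt
  have hv_x : HasDerivAt (fun y => v t y) (px v t x) x :=
    ((hVx.differentiable (by norm_num)) x).hasDerivAt
  set W : ℝ → ℝ := fun y => u t y + v t y with hWdef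
  set p : ℝ := deriv W x with hpdef
  set pp : ℝ := deriv (deriv W) x with hppdef
  have hW_x : HasDerivAt W p x := (hW2.1 x).hasDerivAt
  have hP_x : HasDerivAt (deriv W) pp x :=
    ((hW2.2.differentiable (by norm_num)) x).hasDerivAt
  -- expand the PDE for u
  have hut : pt u t x = px u t x * p + u t x * pp := by
    have := (hu_x.mul hP_x).deriv
    rw [hu t x]
    exact this
  have hvt : pt v t x = px v t x * p + v t x * pp := by
    have := (hv_x.mul hP_x).deriv
    rw [hv t x]
    exact this
  -- logarithmic derivatives
  have hA := hupos t x
  have hB := hvpos t x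
  have hlogu_t : HasDerivAt (fun s => Real.log (u s x)) (pt u t x / u t x) t :=
    hu_t.log (hupos t x).ne'
  have hlogv_t : HasDerivAt (fun s => Real.log (v s x)) (pt v t x / v t x) t :=
    hv_t.log (hvpos t x).ne'
  have hlogu_x : HasDerivAt (fun y => Real.log (u t y)) (px u t x / u t x) x :=
    hu_x.log (hupos t x).ne'
  have hlogv_x : HasDerivAt (fun y => Real.log (v t y)) (px v t x / v t x) x :=
    hv_x.log (hvpos t x).ne'
  have hlog : ∀ s y : ℝ, Real.log (u s y / v s y) = Real.log (u s y) - Real.log (v s y) :=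
    fun s y => Real.log_div (hupos s y).ne' (hvpos s y).ne'
  -- compute the left-hand side
  have hL : HasDerivAt (fun s => u s x * (Real.log (u s x) - Real.log (v s x)))
      (pt u t x * (Real.log (u t x) - Real.log (v t x))
        + u t x * (pt u t x / u t x - pt v t x / v t x)) t :=
    hu_t.mul (hlogu_t.sub hlogv_t)
  -- compute the right-hand side
  have hG : HasDerivAt (fun y => u t y * (Real.log (u t y) - Real.log (v t y)))
      (px u t x * (Real.log (u t x) - Real.log (v t x))
        + u t x * (px u t x / u t x - px v t x / v t x)) x :=
    hu_x.mul (hlogu_x.sub hlogv_x)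
  have hR : HasDerivAt (fun y => u t y * (Real.log (u t y) - Real.log (v t y)) * deriv W y)
      ((px u t x * (Real.log (u t x) - Real.log (v t x))
        + u t x * (px u t x / u t x - px v t x / v t x)) * p
        + u t x * (Real.log (u t x) - Real.log (v t x)) * pp) x :=
    hG.mul hP_x
  show deriv (fun s => u s x * Real.log (u s x / v s x)) t
      = deriv (fun y => u t y * Real.log (u t y / v t y)
          * deriv (fun b => u t b + v t b) y) x
  simp only [hlog]
  rw [hL.deriv, hR.deriv, hut, hvt]
  field_simp
  ring
end

section
/- Let T > 0 and let u, v : [0,T] × ℝ → ℝ be twice continuously differentiable with u(t,x) > 0 and v(t,x) > 0 everywhere, satisfying ∂_t u = ∂_x(u ∂_x(u+v)) and ∂_t v = ∂_x(v ∂_x(u+v)) on (0,T) × ℝ. Assume the decay condition: there exists R > 0 such that u(t,x) = v(t,x) for all t ∈ [0,T] and all |x| ≥ R, and that u(t,·) log(u(t,·)/v(t,·)) is integrable for each t. Then the relative entropy t ↦ H(u(t)||v(t)) = ∫_ℝ u(t,x) log( u(t,x)/v(t,x) ) dx is constant on [0,T]; in particular H(u(t)||v(t)) = H(u(0)||v(0))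 for all t ∈ [0,T]. -/
open Real Set MeasureTheory

/-! Along the flow the entropy density `h = u log (u / v)` satisfies the conservation law
`∂ₜh = ∂ₓ(u ∂ₓ(u + v) log (u / v))`: expanding both sides with the two equations, the terms
`∂ₓu ∂ₓ(u + v)` and `u ∂ₓ²(u + v)` cancel between `∂ₜu (log (u / v) + 1)` and `(u / v) ∂ₜv`.
Density and flux vanish wherever `u = v`, hence outside a fixed compact set, so differentiating
under the integral gives `d/dt ∫ h = ∫ ∂ₓ(flux) = 0` on `(0, T)`; continuity of `t ↦ ∫ h` on
`[0, T]` then gives constancy on the closed interval. -/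

open Filter Function Topology

theorem eq_of_hasDerivAt_zero_of_continuousOn {f : ℝ → ℝ} {a b : ℝ} (hab : a ≤ b)
    (hf : ContinuousOn f (Icc a b)) (hf' : ∀ x ∈ Ioo a b, HasDerivAt f 0 x) : f b = f a := by
  rcases hab.eq_or_lt with rfl | hlt
  · rfl
  obtain ⟨c, -, hc⟩ := exists_hasDerivAt_eq_slope f (fun _ => 0) hlt hf hf'
  rw [eq_comm, div_eq_zero_iff, sub_eq_zero] at hc
  exact hc.resolve_right (sub_ne_zero.2 hlt.ne')

theorem integral_eq_zero_of_hasDerivAt_of_hasCompactSupport {E : Type*} [NormedAddCommGroup E]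
    [NormedSpace ℝ E] {f f' : ℝ → E} (hf : ∀ x, HasDerivAt f (f' x) x) (hf' : Continuous f')
    (hfc : HasCompactSupport f) : ∫ x, f' x = 0 := by
  have hderiv : deriv f = f' := funext fun x => (hf x).deriv
  refine integral_eq_zero_of_hasDerivAt_of_integrable hf ?_ ?_
  · exact hf'.integrable_of_hasCompactSupport (hderiv ▸ hfc.deriv)
  · exact (Differentiable.continuous fun x => (hf x).differentiableAt
      ).integrable_of_hasCompactSupport hfc

section ParametricIntegral

variable {Y E : Type*} [TopologicalSpace Y] [T2Space Y] [MeasurableSpace Y]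
  [OpensMeasurableSpace Y] {μ : Measure Y} [IsFiniteMeasureOnCompacts μ]
  [NormedAddCommGroup E] [NormedSpace ℝ E]

theorem HasDerivAt.eq_zero_of_eventuallyEq_zero {f : ℝ → E} {f' : E} {t : ℝ}
    (hf : HasDerivAt f f' t) (h : f =ᶠ[𝓝 t] fun _ => 0) : f' = 0 :=
  hf.unique ((hasDerivAt_const t 0).congr_of_eventuallyEq h)

theorem hasDerivAt_integral_of_continuousOn_of_compact_support {F F' : ℝ → Y → E} {s : Set ℝ}
    {k : Set Y} {t₀ : ℝ} (hs : IsOpen s) (ht₀ : t₀ ∈ s) (hk : IsCompact k)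
    (hF : ContinuousOn (uncurry F) (s ×ˢ univ)) (hF' : ContinuousOn (uncurry F') (s ×ˢ univ))
    (hFk : ∀ t ∈ s, ∀ y ∉ k, F t y = 0)
    (hderiv : ∀ t ∈ s, ∀ y, HasDerivAt (F · y) (F' t y) t) :
    HasDerivAt (fun t => ∫ y, F t y ∂μ) (∫ y, F' t₀ y ∂μ) t₀ := by
  have hF'k : ∀ t ∈ s, ∀ y ∉ k, F' t y = 0 := fun t ht y hy =>
    (hderiv t ht y).eq_zero_of_eventuallyEq_zero
      (eventually_of_mem (hs.mem_nhds ht) fun t' ht' => hFk t' ht' y hy)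
  have hslice : ∀ {G : ℝ → Y → E}, ContinuousOn (uncurry G) (s ×ˢ univ) →
      (∀ t ∈ s, ∀ y ∉ k, G t y = 0) → ∀ t ∈ s, Integrable (G t) μ := fun hG hGk t ht =>
    (hG.comp_continuous (continuous_const.prodMk continuous_id) fun y => ⟨ht, mem_univ y⟩
      ).integrable_of_hasCompactSupport (HasCompactSupport.intro hk (hGk t ht))
  obtain ⟨ε, hε, hεs⟩ := Metric.nhds_basis_closedBall.mem_iff.1 (hs.mem_nhds ht₀)
  obtain ⟨C, hC⟩ := ((isCompact_closedBall t₀ ε).prod hk).exists_bound_of_continuousOn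
    (hF'.mono (prod_mono hεs (subset_univ k)))
  have hbound : ∀ᵐ y ∂μ, ∀ t ∈ Metric.ball t₀ ε, ‖F' t y‖ ≤ k.indicator (fun _ => C) y := by
    refine ae_of_all μ fun y t ht => ?_
    by_cases hy : y ∈ k
    · rw [indicator_of_mem hy]
      exact hC (t, y) ⟨Metric.ball_subset_closedBall ht, hy⟩
    · rw [indicator_of_notMem hy, hF'k t (hεs (Metric.ball_subset_closedBall ht)) y hy, norm_zero]
  refine (hasDerivAt_integral_of_dominated_loc_of_deriv_le (Metric.ball_mem_nhds t₀ hε)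
    (eventually_of_mem (hs.mem_nhds ht₀) fun t ht => (hslice hF hFk t ht).aestronglyMeasurable)
    (hslice hF hFk t₀ ht₀) (hslice hF' hF'k t₀ ht₀).aestronglyMeasurable hbound ?_
    (ae_of_all μ fun y t ht => hderiv t (hεs (Metric.ball_subset_closedBall ht)) y)).2
  exact (integrable_indicator_iff hk.measurableSet).2 (integrableOn_const hk.measure_lt_top.ne)

end ParametricIntegral

theorem ContDiffOn.contDiff_slice {𝕜 E F G : Type*} [NontriviallyNormedField 𝕜]
    [NormedAddCommGroup E] [NormedSpace 𝕜 E] [NormedAddCommGroup F] [NormedSpace 𝕜 F]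
    [NormedAddCommGroup G] [NormedSpace 𝕜 G] {n : WithTop ℕ∞} {f : E → F → G} {s : Set E} {t : E}
    (hf : ContDiffOn 𝕜 n (uncurry f) (s ×ˢ univ)) (ht : t ∈ s) : ContDiff 𝕜 n (f t) :=
  contDiffOn_univ.1 <| hf.comp (contDiff_const.prodMk contDiff_id).contDiffOn
    fun y _ => ⟨ht, mem_univ y⟩

theorem ContDiffOn.hasDerivAt_pt {f : ℝ → ℝ → ℝ} {s : Set ℝ} {n : WithTop ℕ∞} {t : ℝ}
    (hf : ContDiffOn ℝ n (uncurry f) (s ×ˢ univ)) (hn : n ≠ 0) (hs : s ∈ 𝓝 t) (x : ℝ) :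
    HasDerivAt (fun s => f s x) (pt f t x) t :=
  ((hf.comp (contDiff_id.prodMk contDiff_const).contDiffOn fun _ hr => ⟨hr, mem_univ x⟩
    ).differentiableOn hn |>.differentiableAt hs).hasDerivAt

theorem ContDiffOn.continuousOn_uncurry_pt {f : ℝ → ℝ → ℝ} {s : Set ℝ} {n : WithTop ℕ∞}
    (hf : ContDiffOn ℝ n (uncurry f) (s ×ˢ univ)) (hn : 1 ≤ n) (hs : IsOpen s) :
    ContinuousOn (uncurry (pt f)) (s ×ˢ univ) := by
  have hsU : IsOpen (s ×ˢ (univ : Set ℝ)) := hs.prod isOpen_univ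
  refine ((ContinuousLinearMap.apply ℝ ℝ ((1 : ℝ), (0 : ℝ))).continuous.comp_continuousOn
    (hf.continuousOn_fderiv_of_isOpen hsU hn)).congr fun p hp => ?_
  have hline : HasDerivAt (fun s => (s, p.2)) ((1 : ℝ), (0 : ℝ)) p.1 :=
    (hasDerivAt_id p.1).prodMk (hasDerivAt_const p.1 p.2)
  exact (((hf.differentiableOn (by positivity)).differentiableAt (hsU.mem_nhds hp)
    ).hasFDerivAt.comp_hasDerivAt p.1 hline).deriv

noncomputable def relEntropyDensity (u v : ℝ → ℝ → ℝ) (t x : ℝ) : ℝ :=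
  u t x * log (u t x / v t x)

noncomputable def relEntropyFlux (u v : ℝ → ℝ → ℝ) (t x : ℝ) : ℝ :=
  u t x * px (fun a b => u a b + v a b) t x * log (u t x / v t x)

noncomputable def relEntropyRate (u v : ℝ → ℝ → ℝ) (t x : ℝ) : ℝ :=
  pt u t x * (log (u t x / v t x) + 1) - u t x / v t x * pt v t x

section RelativeEntropy

variable {u v : ℝ → ℝ → ℝ} {t x : ℝ}

theorem relEntropyDensity_of_eq (h : u t x = v t x) : relEntropyDensity u v t x = 0 := by
  simp [relEntropyDensity, h]

theorem relEntropyFlux_of_eq (h : u t x = v t x) : relEntropyFlux u v t x = 0 := by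
  simp [relEntropyFlux, h]

theorem hasDerivAt_relEntropyDensity (hu : HasDerivAt (fun s => u s x) (pt u t x) t)
    (hv : HasDerivAt (fun s => v s x) (pt v t x) t) (hu₀ : 0 < u t x) (hv₀ : 0 < v t x) :
    HasDerivAt (relEntropyDensity u v · x) (relEntropyRate u v t x) t := by
  refine (hu.mul ((hu.div hv hv₀.ne').log (div_pos hu₀ hv₀).ne')).congr_deriv ?_
  simp only [relEntropyRate, Pi.div_apply]
  field_simp
  ring

theorem hasDerivAt_relEntropyFlux (hu : ContDiff ℝ 2 (u t)) (hv : ContDiff ℝ 2 (v t))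
    (hu₀ : 0 < u t x) (hv₀ : 0 < v t x)
    (hut : pt u t x = px (fun s y => u s y * px (fun a b => u a b + v a b) s y) t x)
    (hvt : pt v t x = px (fun s y => v s y * px (fun a b => u a b + v a b) s y) t x) :
    HasDerivAt (relEntropyFlux u v t) (relEntropyRate u v t x) x := by
  set P := px (fun a b => u a b + v a b) t
  have hP : HasDerivAt P (deriv P x) x := ((hu.add hv).differentiable_deriv_two x).hasDerivAt
  have hU : HasDerivAt (u t) (deriv (u t) x) x := (hu.differentiable two_ne_zero x).hasDerivAt
  have hV : HasDerivAt (v t) (deriv (v t) x) x := (hv.differentiable two_ne_zero x).hasDerivAt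
  have hut' : pt u t x = deriv (u t) x * P x + u t x * deriv P x := hut.trans (hU.mul hP).deriv
  have hvt' : pt v t x = deriv (v t) x * P x + v t x * deriv P x := hvt.trans (hV.mul hP).deriv
  refine ((hU.mul hP).mul ((hU.div hV hv₀.ne').log (div_pos hu₀ hv₀).ne')).congr_deriv ?_
  simp only [relEntropyRate, hut', hvt', Pi.mul_apply, Pi.div_apply]
  field_simp
  ring

theorem continuousOn_relEntropyDensity {S : Set (ℝ × ℝ)} (hu : ContinuousOn (uncurry u) S)
    (hv : ContinuousOn (uncurry v) S) (hu₀ : ∀ t x, 0 < u t x) (hv₀ : ∀ t x, 0 < v t x) :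
    ContinuousOn (uncurry (relEntropyDensity u v)) S :=
  hu.mul ((hu.div hv fun p _ => (hv₀ p.1 p.2).ne').log fun p _ =>
    (div_pos (hu₀ p.1 p.2) (hv₀ p.1 p.2)).ne')

theorem continuousOn_relEntropyRate {s : Set ℝ} (hs : IsOpen s)
    (hu : ContDiffOn ℝ 2 (uncurry u) (s ×ˢ univ)) (hv : ContDiffOn ℝ 2 (uncurry v) (s ×ˢ univ))
    (hu₀ : ∀ t x, 0 < u t x) (hv₀ : ∀ t x, 0 < v t x) :
    ContinuousOn (uncurry (relEntropyRate u v)) (s ×ˢ univ) := by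
  have hquot : ContinuousOn (fun p : ℝ × ℝ => u p.1 p.2 / v p.1 p.2) (s ×ˢ univ) :=
    hu.continuousOn.div hv.continuousOn fun p _ => (hv₀ p.1 p.2).ne'
  exact ((hu.continuousOn_uncurry_pt one_le_two hs).mul ((hquot.log fun p _ =>
    (div_pos (hu₀ p.1 p.2) (hv₀ p.1 p.2)).ne').add continuousOn_const)).sub
    (hquot.mul (hv.continuousOn_uncurry_pt one_le_two hs))

end RelativeEntropy

theorem stmt_11_general (T : ℝ) (u v : ℝ → ℝ → ℝ)
    (husmooth : ContDiffOn ℝ 2 (Function.uncurry u) (Icc 0 T ×ˢ univ))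
    (hvsmooth : ContDiffOn ℝ 2 (Function.uncurry v) (Icc 0 T ×ˢ univ))
    (hupos : ∀ t x : ℝ, 0 < u t x) (hvpos : ∀ t x : ℝ, 0 < v t x)
    (hu : ∀ t ∈ Ioo (0:ℝ) T, ∀ x : ℝ,
      pt u t x = px (fun s y => u s y * px (fun a b => u a b + v a b) s y) t x)
    (hv : ∀ t ∈ Ioo (0:ℝ) T, ∀ x : ℝ,
      pt v t x = px (fun s y => v s y * px (fun a b => u a b + v a b) s y) t x)
    (R : ℝ)
    (hdecay : ∀ t ∈ Icc (0:ℝ) T, ∀ x : ℝ, R ≤ |x| → u t x = v t x) :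
    ∀ t ∈ Icc (0:ℝ) T,
      ∫ x, u t x * Real.log (u t x / v t x)
        = ∫ x, u 0 x * Real.log (u 0 x / v 0 x) := by
  have hsupp : ∀ t ∈ Icc (0:ℝ) T, ∀ x ∉ Metric.closedBall (0:ℝ) R, u t x = v t x :=
    fun t ht x hx => hdecay t ht x (le_of_lt (by simpa using hx))
  have hu' := husmooth.mono (prod_mono Ioo_subset_Icc_self subset_rfl)
  have hv' := hvsmooth.mono (prod_mono Ioo_subset_Icc_self subset_rfl)
  have hrate := continuousOn_relEntropyRate isOpen_Ioo hu' hv' hupos hvpos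
  have hH' : ∀ t ∈ Ioo 0 T, HasDerivAt (fun t => ∫ x, relEntropyDensity u v t x) 0 t := by
    intro t ht
    have hzero : ∫ x, relEntropyRate u v t x = 0 :=
      integral_eq_zero_of_hasDerivAt_of_hasCompactSupport
        (fun x => hasDerivAt_relEntropyFlux (hu'.contDiff_slice ht) (hv'.contDiff_slice ht)
          (hupos t x) (hvpos t x) (hu t ht x) (hv t ht x))
        (hrate.comp_continuous (continuous_const.prodMk continuous_id) fun x => ⟨ht, mem_univ x⟩)
        (HasCompactSupport.intro (isCompact_closedBall 0 R) fun x hx =>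
          relEntropyFlux_of_eq (hsupp t (Ioo_subset_Icc_self ht) x hx))
    rw [← hzero]
    exact hasDerivAt_integral_of_continuousOn_of_compact_support isOpen_Ioo ht
      (isCompact_closedBall 0 R) (continuousOn_relEntropyDensity hu'.continuousOn
        hv'.continuousOn hupos hvpos) hrate
      (fun s hs x hx => relEntropyDensity_of_eq (hsupp s (Ioo_subset_Icc_self hs) x hx))
      fun s hs x => hasDerivAt_relEntropyDensity (hu'.hasDerivAt_pt two_ne_zero
        (isOpen_Ioo.mem_nhds hs) x) (hv'.hasDerivAt_pt two_ne_zero (isOpen_Ioo.mem_nhds hs) x)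
        (hupos s x) (hvpos s x)
  have hH : ContinuousOn (fun t => ∫ x, relEntropyDensity u v t x) (Icc 0 T) :=
    continuousOn_integral_of_compact_support (isCompact_closedBall 0 R)
      (continuousOn_relEntropyDensity husmooth.continuousOn hvsmooth.continuousOn hupos hvpos)
      fun t x ht hx => relEntropyDensity_of_eq (hsupp t ht x hx)
  intro t ht
  exact eq_of_hasDerivAt_zero_of_continuousOn ht.1 (hH.mono (Icc_subset_Icc_right ht.2))
    fun s hs => hH' s ⟨hs.1, hs.2.trans_le ht.2⟩

/-- Preservation of the relative entropy: for positive solutions of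
`∂ₜu = ∂ₓ(u ∂ₓ(u+v))`, `∂ₜv = ∂ₓ(v ∂ₓ(u+v))` on `(0,T) × ℝ` which agree outside a
compact set, the relative entropy `H(u(t)‖v(t)) = ∫ u log(u/v) dx` is constant on `[0,T]`. -/
theorem stmt_11 (T : ℝ) (hT : 0 < T) (u v : ℝ → ℝ → ℝ)
    (husmooth : ContDiffOn ℝ 2 (Function.uncurry u) (Icc 0 T ×ˢ univ))
    (hvsmooth : ContDiffOn ℝ 2 (Function.uncurry v) (Icc 0 T ×ˢ univ))
    (hupos : ∀ t x : ℝ, 0 < u t x) (hvpos : ∀ t x : ℝ, 0 < v t x)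
    (hu : ∀ t ∈ Ioo (0:ℝ) T, ∀ x : ℝ,
      pt u t x = px (fun s y => u s y * px (fun a b => u a b + v a b) s y) t x)
    (hv : ∀ t ∈ Ioo (0:ℝ) T, ∀ x : ℝ,
      pt v t x = px (fun s y => v s y * px (fun a b => u a b + v a b) s y) t x)
    (R : ℝ) (hR : 0 < R)
    (hdecay : ∀ t ∈ Icc (0:ℝ) T, ∀ x : ℝ, R ≤ |x| → u t x = v t x)
    (hint : ∀ t ∈ Icc (0:ℝ) T,
      Integrable (fun x => u t x * Real.log (u t x / v t x))) :
    ∀ t ∈ Icc (0:ℝ) T,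
      ∫ x, u t x * Real.log (u t x / v t x)
        = ∫ x, u 0 x * Real.log (u 0 x / v 0 x) :=
  stmt_11_general T u v husmooth hvsmooth hupos hvpos hu hv R hdecay
end

section
/- Let f : ℝ → ℝ be twice continuously differentiable and let u, v : ℝ × ℝ → ℝ be twice continuously differentiable with u(t,x) > 0 and v(t,x) > 0 everywhere, satisfying the general system ∂_t u = ∂_x( u ∂_x( f(u+v) ) ) and ∂_t v = ∂_x( v ∂_x( f(u+v) ) ). Then the relative entropy density satisfies the local conservation law ∂_t ( u log(u/v) ) = ∂_x ( u log(u/v) · ∂_x( f(u+v) ) ) at every point (t,x). -/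
open Real Set

/-!
Write `φ = ∂ₓ f(u+v)`, so that `u` and `v` solve continuity equations `∂ₜρ = ∂ₓ(ρφ)` with the
same velocity `φ`. Their ratio `r = u/v` is then transported, `∂ₜr = φ ∂ₓr`, and so is `g(r)` for
any differentiable `g`. A density solving the continuity equation times a transported quantity
again solves it, and `u log(u/v) = v g(u/v)` with `g r = r log r`.
-/

section Slices

variable {n : WithTop ℕ∞} {W : ℝ → ℝ → ℝ}

theorem ContDiff.curry_left (h : ContDiff ℝ n (Function.uncurry W)) (x : ℝ) :
    ContDiff ℝ n (fun s => W s x) :=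
  h.comp (contDiff_id.prodMk contDiff_const)

theorem ContDiff.curry_right (h : ContDiff ℝ n (Function.uncurry W)) (t : ℝ) :
    ContDiff ℝ n (fun y => W t y) :=
  h.comp (contDiff_const.prodMk contDiff_id)

end Slices

section Calculus

variable {t x : ℝ} {u v w : ℝ → ℝ → ℝ}

theorem pt_mul (hu : DifferentiableAt ℝ (fun s => u s x) t)
    (hv : DifferentiableAt ℝ (fun s => v s x) t) :
    pt (fun s y => u s y * v s y) t x = pt u t x * v t x + u t x * pt v t x :=
  deriv_mul hu hv

theorem px_mul (hu : DifferentiableAt ℝ (fun y => u t y) x)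
    (hv : DifferentiableAt ℝ (fun y => v t y) x) :
    px (fun s y => u s y * v s y) t x = px u t x * v t x + u t x * px v t x :=
  deriv_mul hu hv

theorem pt_div (hu : DifferentiableAt ℝ (fun s => u s x) t)
    (hv : DifferentiableAt ℝ (fun s => v s x) t) (hv₀ : v t x ≠ 0) :
    pt (fun s y => u s y / v s y) t x
      = (pt u t x * v t x - u t x * pt v t x) / v t x ^ 2 :=
  deriv_div hu hv hv₀

theorem px_div (hu : DifferentiableAt ℝ (fun y => u t y) x)
    (hv : DifferentiableAt ℝ (fun y => v t y) x) (hv₀ : v t x ≠ 0) :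
    px (fun s y => u s y / v s y) t x
      = (px u t x * v t x - u t x * px v t x) / v t x ^ 2 :=
  deriv_div hu hv hv₀

theorem pt_comp {g : ℝ → ℝ} (hg : DifferentiableAt ℝ g (w t x))
    (hw : DifferentiableAt ℝ (fun s => w s x) t) :
    pt (fun s y => g (w s y)) t x = deriv g (w t x) * pt w t x :=
  deriv_comp (h := fun s => w s x) t hg hw

theorem px_comp {g : ℝ → ℝ} (hg : DifferentiableAt ℝ g (w t x))
    (hw : DifferentiableAt ℝ (fun y => w t y) x) :
    px (fun s y => g (w s y)) t x = deriv g (w t x) * px w t x :=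
  deriv_comp (h := fun y => w t y) x hg hw

end Calculus

section Transport

variable {t x : ℝ} {u v w ρ φ : ℝ → ℝ → ℝ}

theorem pt_div_eq_of_continuity
    (hut : DifferentiableAt ℝ (fun s => u s x) t) (hux : DifferentiableAt ℝ (fun y => u t y) x)
    (hvt : DifferentiableAt ℝ (fun s => v s x) t) (hvx : DifferentiableAt ℝ (fun y => v t y) x)
    (hφx : DifferentiableAt ℝ (fun y => φ t y) x) (hv₀ : v t x ≠ 0)
    (hu : pt u t x = px (fun s y => u s y * φ s y) t x)
    (hv : pt v t x = px (fun s y => v s y * φ s y) t x) :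
    pt (fun s y => u s y / v s y) t x = φ t x * px (fun s y => u s y / v s y) t x := by
  rw [pt_div hut hvt hv₀, px_div hux hvx hv₀, hu, hv, px_mul hux hφx, px_mul hvx hφx]
  ring

theorem pt_comp_eq_of_transport {g : ℝ → ℝ} (hg : DifferentiableAt ℝ g (w t x))
    (hwt : DifferentiableAt ℝ (fun s => w s x) t) (hwx : DifferentiableAt ℝ (fun y => w t y) x)
    (hw : pt w t x = φ t x * px w t x) :
    pt (fun s y => g (w s y)) t x = φ t x * px (fun s y => g (w s y)) t x := by
  rw [pt_comp hg hwt, px_comp hg hwx, hw]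
  ring

theorem pt_mul_eq_of_continuity_of_transport
    (hρt : DifferentiableAt ℝ (fun s => ρ s x) t) (hρx : DifferentiableAt ℝ (fun y => ρ t y) x)
    (hwt : DifferentiableAt ℝ (fun s => w s x) t) (hwx : DifferentiableAt ℝ (fun y => w t y) x)
    (hφx : DifferentiableAt ℝ (fun y => φ t y) x)
    (hρ : pt ρ t x = px (fun s y => ρ s y * φ s y) t x) (hw : pt w t x = φ t x * px w t x) :
    pt (fun s y => ρ s y * w s y) t x = px (fun s y => ρ s y * w s y * φ s y) t x := by
  rw [pt_mul hρt hwt, px_mul (u := fun s y => ρ s y * w s y) (hρx.mul hwx) hφx,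
    px_mul hρx hwx, hρ, hw, px_mul hρx hφx]
  ring

theorem pt_perspective_eq_of_continuity {g : ℝ → ℝ} (hg : DifferentiableAt ℝ g (u t x / v t x))
    (hut : DifferentiableAt ℝ (fun s => u s x) t) (hux : DifferentiableAt ℝ (fun y => u t y) x)
    (hvt : DifferentiableAt ℝ (fun s => v s x) t) (hvx : DifferentiableAt ℝ (fun y => v t y) x)
    (hφx : DifferentiableAt ℝ (fun y => φ t y) x) (hv₀ : v t x ≠ 0)
    (hu : pt u t x = px (fun s y => u s y * φ s y) t x)
    (hv : pt v t x = px (fun s y => v s y * φ s y) t x) :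
    pt (fun s y => v s y * g (u s y / v s y)) t x
      = px (fun s y => v s y * g (u s y / v s y) * φ s y) t x := by
  have hrt : DifferentiableAt ℝ (fun s => u s x / v s x) t := hut.div hvt hv₀
  have hrx : DifferentiableAt ℝ (fun y => u t y / v t y) x := hux.div hvx hv₀
  have hr := pt_div_eq_of_continuity hut hux hvt hvx hφx hv₀ hu hv
  exact pt_mul_eq_of_continuity_of_transport hvt hvx (hg.comp t hrt) (hg.comp x hrx) hφx hv
    (pt_comp_eq_of_transport (w := fun s y => u s y / v s y) hg hrt hrx hr)

end Transport

/-- For positive solutions of the general system `∂ₜu = ∂ₓ(u ∂ₓ(f(u+v)))`,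
`∂ₜv = ∂ₓ(v ∂ₓ(f(u+v)))`, the relative entropy density satisfies the local
conservation law `∂ₜ(u log(u/v)) = ∂ₓ(u log(u/v) ∂ₓ(f(u+v)))`. -/
theorem stmt_14 (f : ℝ → ℝ) (hf : ContDiff ℝ 2 f) (u v : ℝ → ℝ → ℝ)
    (husmooth : ContDiff ℝ 2 (Function.uncurry u))
    (hvsmooth : ContDiff ℝ 2 (Function.uncurry v))
    (hupos : ∀ t x : ℝ, 0 < u t x) (hvpos : ∀ t x : ℝ, 0 < v t x)
    (hu : ∀ t x : ℝ,
      pt u t x = px (fun s y => u s y * px (fun a b => f (u a b + v a b)) s y) t x)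
    (hv : ∀ t x : ℝ,
      pt v t x = px (fun s y => v s y * px (fun a b => f (u a b + v a b)) s y) t x) :
    ∀ t x : ℝ,
      pt (fun s y => u s y * Real.log (u s y / v s y)) t x
        = px (fun s y =>
            u s y * Real.log (u s y / v s y)
              * px (fun a b => f (u a b + v a b)) s y) t x := by
  intro t x
  have hF : ContDiff ℝ (1 + 1) (fun y => f (u t y + v t y)) :=
    hf.comp ((husmooth.curry_right t).add (hvsmooth.curry_right t))
  have hφx : DifferentiableAt ℝ (fun y => px (fun a b => f (u a b + v a b)) t y) x :=
    hF.deriv'.differentiable one_ne_zero x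
  have hperspective : ∀ s y, u s y * log (u s y / v s y)
      = v s y * (u s y / v s y * log (u s y / v s y)) := fun s y => by
    field_simp [(hvpos s y).ne']
  simp only [hperspective]
  have hut := (husmooth.curry_left x).differentiable two_ne_zero t
  have hux := (husmooth.curry_right t).differentiable two_ne_zero x
  have hvt := (hvsmooth.curry_left x).differentiable two_ne_zero t
  have hvx := (hvsmooth.curry_right t).differentiable two_ne_zero x
  have hg : DifferentiableAt ℝ (fun r => r * log r) (u t x / v t x) :=
    differentiableAt_id.mul (differentiableAt_log (div_pos (hupos t x) (hvpos t x)).ne')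
  exact pt_perspective_eq_of_continuity hg hut hux hvt hvx hφx (hvpos t x).ne' (hu t x) (hv t x)
end
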